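/- Let P, Q be nonzero coprime polynomials over F_q with deg P > deg Q ≥ 1, a ∈ D*, and b ∈ D* of length ℓ > 0. If π(a b^n) ∈ F_q[X] for all n ∈ ℕ, then Q^{(n-1)ℓ} divides π(ab) − π(a) in F_q[X] for every n ≥ 1. -/

import Mathlib

open Polynomial

/-- Evaluation map `π` of a digit word `s_k ⋯ s_0` (given as a list with the most
significant digit first): `π(s_k ⋯ s_0) = ∑_{i=0}^k (s_i/Q)(P/Q)^i ∈ F_q(X)`. -/
noncomputable def piEval {Fq : Type*} [Field Fq] (P Q : Polynomial Fq)
    (L : List (Polynomial Fq)) : RatFunc Fq :=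
  ∑ i ∈ Finset.range L.length,
    (algebraMap (Polynomial Fq) (RatFunc Fq) (L.reverse.getD i 0) /
      algebraMap (Polynomial Fq) (RatFunc Fq) Q) *
    ((algebraMap (Polynomial Fq) (RatFunc Fq) P) /
      (algebraMap (Polynomial Fq) (RatFunc Fq) Q)) ^ i

/-! Appending the same tail `w` to two words multiplies the difference of their values by
`(P/Q)^|w|`. When all values are polynomials, clearing denominators gives
`Q^|w| · (π(a'w) - π(aw)) = P^|w| · (π(a') - π(a))`, and coprimality of `P` and `Q` yields
`Q^|w| ∣ π(a') - π(a)`. Applied to `a' = ab`, `w = b^(n-1)` this is the theorem. -/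

theorem IsCoprime.pow_dvd_of_algebraMap_eq_div_pow_mul {R K : Type*} [CommRing R] [Field K]
    [Algebra R K] [IsFractionRing R K] {p q d e : R} (hpq : IsCoprime p q) (hq : q ≠ 0)
    (m : ℕ) (h : algebraMap R K d = (algebraMap R K p / algebraMap R K q) ^ m * algebraMap R K e) :
    q ^ m ∣ e := by
  have hinj := IsFractionRing.injective R K
  have hq' : algebraMap R K q ≠ 0 := (map_ne_zero_iff _ hinj).mpr hq
  have hcleared : q ^ m * d = p ^ m * e := hinj <| by
    simp only [map_mul, map_pow, h, div_pow]
    field_simp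
  exact hpq.symm.pow.dvd_of_dvd_mul_left ⟨d, hcleared.symm⟩

section piEval

variable {Fq : Type*} [Field Fq] (P Q : Fq[X])

lemma piEval_append (a w : List Fq[X]) :
    piEval P Q (a ++ w) = piEval P Q w +
      (algebraMap Fq[X] (RatFunc Fq) P / algebraMap Fq[X] (RatFunc Fq) Q) ^ w.length *
        piEval P Q a := by
  unfold piEval
  rw [List.length_append, add_comm a.length w.length, Finset.sum_range_add, Finset.mul_sum]
  congr 1
  · refine Finset.sum_congr rfl fun i hi => ?_
    rw [List.reverse_append, List.getD_append _ _ _ _ (by simpa using Finset.mem_range.mp hi)]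
  · refine Finset.sum_congr rfl fun i _ => ?_
    rw [List.reverse_append, List.getD_append_right _ _ _ _ (by simp), pow_add]
    simp only [List.length_reverse, add_tsub_cancel_left]
    ring

lemma piEval_append_sub_piEval_append (a a' w : List Fq[X]) :
    piEval P Q (a' ++ w) - piEval P Q (a ++ w) =
      (algebraMap Fq[X] (RatFunc Fq) P / algebraMap Fq[X] (RatFunc Fq) Q) ^ w.length *
        (piEval P Q a' - piEval P Q a) := by
  rw [piEval_append, piEval_append]
  ring

end piEval

theorem pq_periodic_tail_divisibility (Fq : Type*) [Field Fq]
    (P Q : Polynomial Fq) (hQ : Q ≠ 0) (hcop : IsCoprime P Q)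
    (a b : List (Polynomial Fq))
    (hpoly : ∀ n : ℕ, ∃ w : Polynomial Fq,
      algebraMap (Polynomial Fq) (RatFunc Fq) w =
        piEval P Q (a ++ (List.replicate n b).flatten)) :
    ∀ n : ℕ, 1 ≤ n → ∀ wab wa : Polynomial Fq,
      algebraMap (Polynomial Fq) (RatFunc Fq) wab = piEval P Q (a ++ b) →
      algebraMap (Polynomial Fq) (RatFunc Fq) wa = piEval P Q a →
      Q ^ ((n - 1) * b.length) ∣ wab - wa := by
  intro n hn wab wa hwab hwa
  obtain ⟨k, rfl⟩ : ∃ k, n = k + 1 := ⟨n - 1, by omega⟩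
  set tail := (List.replicate k b).flatten
  have htail : tail.length = k * b.length := by simp [tail]
  obtain ⟨u, hu⟩ := hpoly k
  obtain ⟨v, hv⟩ := hpoly (k + 1)
  rw [List.replicate_succ, List.flatten_cons, ← List.append_assoc] at hv
  refine hcop.pow_dvd_of_algebraMap_eq_div_pow_mul (K := RatFunc Fq) (d := v - u) hQ _ ?_
  rw [map_sub, map_sub, hu, hv, hwab, hwa, piEval_append_sub_piEval_append, htail,
    Nat.add_sub_cancel]
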